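/- arXiv:1307.1165 — 2 statements merged into one kernel-verified Lean document; each statement's English description precedes it below -/
import Mathlib

section
/- Let p be an odd prime and F an imaginary quadratic field. If g ∈ GL_N(F) has order p, then p ≤ N+1 if p ≡ 1 (mod 4), and p ≤ 2N+1 otherwise. -/
/-!
An element of order `p` of `GL_N(F)` has an eigenvalue `ζ` that is a primitive `p`-th root of
unity, lying in an extension `K` of `F` of degree at most `N`. Then `[K : ℚ] ≤ 2N` is a multiple
of `[ℚ(ζ) : ℚ] = p - 1`, whence `p ≤ 2N + 1`. If moreover `p ≡ 1 (mod 4)` and `p > N + 1`, the two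
degrees coincide, so `K = ℚ(ζ)` and `F` is a quadratic subfield of `ℚ(ζ)`. The Galois group of
`ℚ(ζ)` is cyclic of order divisible by `4`, so complex conjugation is a square there and fixes
every quadratic subfield; hence `F` would have a real embedding.
-/

open Polynomial Module NumberField IntermediateField

theorem IsCyclic.isSquare_of_sq_eq_one {G : Type*} [Group G] [IsCyclic G]
    (h4 : 4 ∣ Nat.card G) {x : G} (hx : x ^ 2 = 1) : IsSquare x := by
  obtain ⟨g, hg⟩ := IsCyclic.exists_generator (α := G)
  obtain ⟨k, rfl⟩ := Subgroup.mem_zpowers_iff.mp (hg x)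
  have h2k : (Nat.card G : ℤ) ∣ 2 * k := by
    rw [← orderOf_eq_card_of_forall_mem_zpowers hg, orderOf_dvd_iff_zpow_eq_one, mul_comm,
      zpow_mul, ← hx, zpow_ofNat]
  obtain ⟨j, rfl⟩ : 2 ∣ k := by
    have : (4 : ℤ) ∣ 2 * k := (Int.natCast_dvd_natCast.mpr h4).trans h2k
    omega
  exact ⟨g ^ j, by rw [← zpow_add, two_mul]⟩

theorem Matrix.exists_irreducible_dvd_cyclotomic_of_pow_eq_one {F ι : Type*} [Field F]
    [Fintype ι] [DecidableEq ι] {A : Matrix ι ι F} {p : ℕ} (hp : p.Prime) (hA : A ^ p = 1)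
    (hA1 : A ≠ 1) :
    ∃ f : F[X], Irreducible f ∧ f ∣ cyclotomic p F ∧ f.natDegree ≤ Fintype.card ι := by
  have := Fact.mk hp
  have hq0 : minpoly F A ≠ 0 := minpoly.ne_zero (IsIntegral.of_finite F A)
  have hq : ¬ minpoly F A ∣ X - 1 := fun h => hA1 <| sub_eq_zero.mp <| by
    simpa using (minpoly.dvd_iff).mp h
  obtain ⟨f, hf, hfq, hfΦ⟩ : ∃ f, Irreducible f ∧ f ∣ minpoly F A ∧ f ∣ cyclotomic p F := by
    by_contra! h
    refine hq ((isCoprime_of_irreducible_dvd (fun h0 => hq0 h0.1) h).dvd_of_dvd_mul_left ?_)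
    rw [cyclotomic_prime_mul_X_sub_one]
    exact minpoly.dvd F A (by simp [hA])
  refine ⟨f, hf, hfΦ, ?_⟩
  calc f.natDegree ≤ (minpoly F A).natDegree := natDegree_le_of_dvd hfq hq0
    _ ≤ A.charpoly.natDegree :=
      natDegree_le_of_dvd A.minpoly_dvd_charpoly A.charpoly_monic.ne_zero
    _ = Fintype.card ι := A.charpoly_natDegree_eq_dim

theorem AdjoinRoot.isPrimitiveRoot_root {F : Type*} [Field F] {n : ℕ} [NeZero (n : F)]
    {f : F[X]} [Fact (Irreducible f)] (hf : f ∣ cyclotomic n F) :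
    IsPrimitiveRoot (root f) n := by
  have : NeZero (n : AdjoinRoot f) := NeZero.nat_of_injective (algebraMap F _).injective
  rw [← isRoot_cyclotomic_iff, ← map_cyclotomic n (of f)]
  exact (isRoot_root f).dvd (map_dvd (of f) hf)

namespace IsPrimitiveRoot

variable {K : Type*} [Field K] [CharZero K] {ζ : K} {n : ℕ} [NeZero n]

theorem natDegree_minpoly_rat (hζ : IsPrimitiveRoot ζ n) :
    (minpoly ℚ ζ).natDegree = n.totient := by
  rw [← cyclotomic_eq_minpoly_rat hζ (NeZero.pos n), natDegree_cyclotomic]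

variable [FiniteDimensional ℚ K]

theorem totient_dvd_finrank_rat (hζ : IsPrimitiveRoot ζ n) : n.totient ∣ finrank ℚ K :=
  hζ.natDegree_minpoly_rat ▸ minpoly.degree_dvd (IsIntegral.of_finite ℚ ζ)

theorem isCyclotomicExtension_of_finrank_eq_totient (hζ : IsPrimitiveRoot ζ n)
    (h : finrank ℚ K = n.totient) : IsCyclotomicExtension {n} ℚ K := by
  have htop : Algebra.adjoin ℚ {ζ} = ⊤ := by
    rw [← adjoin_simple_toSubalgebra_of_isAlgebraic (IsIntegral.of_finite ℚ ζ).isAlgebraic,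
      (Field.primitive_element_iff_minpoly_natDegree_eq ℚ ζ).mpr
        (by rw [h, hζ.natDegree_minpoly_rat]),
      top_toSubalgebra]
  have := hζ.adjoin_isCyclotomicExtension ℚ
  exact IsCyclotomicExtension.equiv {n} ℚ _
    ((Subalgebra.equivOfEq _ _ htop).trans Subalgebra.topEquiv)

end IsPrimitiveRoot

theorem NumberField.IsCMField.complexConj_eq_self_of_finrank_eq_two {K : Type*} [Field K]
    [NumberField K] [IsCMField K] [IsGalois ℚ K] [IsCyclic Gal(K/ℚ)] (h4 : 4 ∣ finrank ℚ K)
    {M : IntermediateField ℚ K} (hM : finrank ℚ M = 2) {x : K} (hx : x ∈ M) :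
    complexConj K x = x := by
  let σ : Gal(K/ℚ) := (complexConj K).restrictScalars ℚ
  have hσ : σ ^ 2 = 1 := AlgEquiv.ext fun y => complexConj_apply_apply K y
  obtain ⟨τ, hτ⟩ := IsCyclic.isSquare_of_sq_eq_one (by rwa [IsGalois.card_aut_eq_finrank]) hσ
  have hσM : σ ∈ M.fixingSubgroup := by
    rw [hτ, ← sq]
    exact Subgroup.sq_mem_of_index_two (by rw [← finrank_eq_fixingSubgroup_index, hM]) τ
  exact (mem_fixingSubgroup_iff M σ).mp hσM x hx

namespace IsCyclotomicExtension.Rat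

variable {K : Type*} [Field K] [CharZero K]

theorem isCyclic_gal {n : ℕ} [NeZero n] [IsCyclic (ZMod n)ˣ] [IsCyclotomicExtension {n} ℚ K] :
    IsCyclic Gal(K/ℚ) :=
  (MulEquiv.isCyclic (autEquivPow K (cyclotomic.irreducible_rat (NeZero.pos n)))).mpr ‹_›

theorem isReal_comp_algebraMap_of_finrank_eq_two {p : ℕ} [hp : Fact p.Prime] (hp4 : p % 4 = 1)
    [IsCyclotomicExtension {p} ℚ K] {F : Type*} [Field F] [CharZero F] [Algebra F K]
    (hF : Module.finrank ℚ F = 2) (φ : K →+* ℂ) :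
    ComplexEmbedding.IsReal (φ.comp (algebraMap F K)) := by
  have := IsCyclotomicExtension.numberField {p} ℚ K
  have := IsCyclotomicExtension.isGalois {p} ℚ K
  have := isCMField K ⟨p, Set.mem_singleton p, by have := hp.out.two_le; omega⟩
  have : IsCyclic (ZMod p)ˣ := ZMod.isCyclic_units_prime hp.out
  have : IsCyclic Gal(K/ℚ) := isCyclic_gal (n := p)
  have h4 : 4 ∣ Module.finrank ℚ K := by
    rw [IsCyclotomicExtension.finrank K (cyclotomic.irreducible_rat hp.out.pos),
      Nat.totient_prime hp.out]
    omega
  let ι := IsScalarTower.toAlgHom ℚ F K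
  have hM : Module.finrank ℚ ι.fieldRange = 2 :=
    hF ▸ (AlgEquiv.ofInjectiveField ι).toLinearEquiv.finrank_eq.symm
  ext x
  simp only [ComplexEmbedding.conjugate_coe_eq, RingHom.comp_apply]
  rw [← IsCMField.complexEmbedding_complexConj,
    IsCMField.complexConj_eq_self_of_finrank_eq_two h4 hM (x := algebraMap F K x) ⟨x, rfl⟩]

end IsCyclotomicExtension.Rat

theorem order_bound_GL_imaginary_quadratic_general
    (F : Type*) [Field F] [NumberField F] (h2 : Module.finrank ℚ F = 2)
    (himag : ∀ φ : F →+* ℝ, False)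
    (N : ℕ) (p : ℕ) (hp : p.Prime)
    (g : GL (Fin N) F) (hg : orderOf g = p) :
    (p % 4 = 1 → p ≤ N + 1) ∧ (p % 4 ≠ 1 → p ≤ 2 * N + 1) := by
  have : Fact p.Prime := ⟨hp⟩
  obtain ⟨f, hf, hfΦ, hfN⟩ := Matrix.exists_irreducible_dvd_cyclotomic_of_pow_eq_one hp
    (A := (g : Matrix (Fin N) (Fin N) F))
    (by rw [← Units.val_pow_eq_pow_val, ← hg, pow_orderOf_eq_one, Units.val_one])
    (fun h => hp.one_lt.ne' (hg ▸ orderOf_eq_one_iff.mpr (Units.ext h)))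
  have := Fact.mk hf
  let K := AdjoinRoot f
  have : CharZero K := charZero_of_injective_algebraMap (algebraMap F K).injective
  let B := AdjoinRoot.powerBasis hf.ne_zero
  have : FiniteDimensional F K := B.finite
  have : FiniteDimensional ℚ K := .trans ℚ F K
  have hK : finrank ℚ K = 2 * f.natDegree := by
    rw [← finrank_mul_finrank ℚ F K, h2, B.finrank, AdjoinRoot.powerBasis_dim]
  have hζ : IsPrimitiveRoot (AdjoinRoot.root f) p := AdjoinRoot.isPrimitiveRoot_root hfΦ
  have hdvd : p - 1 ∣ 2 * f.natDegree := by
    rw [← hK, ← Nat.totient_prime hp]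
    exact hζ.totient_dvd_finrank_rat
  have hdeg := hf.natDegree_pos
  rw [Fintype.card_fin] at hfN
  have hle := Nat.le_of_dvd (by omega) hdvd
  refine ⟨fun hp4 => ?_, fun _ => by omega⟩
  by_contra! hpN
  have := hζ.isCyclotomicExtension_of_finrank_eq_totient <| by
    rw [hK, Nat.totient_prime hp, Nat.eq_of_dvd_of_lt_two_mul (by omega) hdvd (by omega)]
  exact himag (IsCyclotomicExtension.Rat.isReal_comp_algebraMap_of_finrank_eq_two hp4 h2
    (Classical.arbitrary (K →+* ℂ))).embedding

/-- Let `p` be an odd prime and `F` an imaginary quadratic field.  If `g ∈ GL_N(F)` has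
order `p`, then `p ≤ N + 1` if `p ≡ 1 (mod 4)`, and `p ≤ 2N + 1` otherwise. -/
theorem order_bound_GL_imaginary_quadratic
    (F : Type*) [Field F] [NumberField F] (h2 : Module.finrank ℚ F = 2)
    (himag : ∀ φ : F →+* ℝ, False)
    (N : ℕ) (hN : 0 < N) (p : ℕ) (hp : p.Prime) (hodd : Odd p)
    (g : GL (Fin N) F) (hg : orderOf g = p) :
    (p % 4 = 1 → p ≤ N + 1) ∧ (p % 4 ≠ 1 → p ≤ 2 * N + 1) :=
  order_bound_GL_imaginary_quadratic_general F h2 himag N p hp g hg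
end

section
/- If g ∈ GL_4(O_F) has prime order q, where O_F is the ring of integers of an imaginary quadratic field F, then q ∈ {2,3,5,7} if F = ℚ(√-7), and q ∈ {2,3,5} otherwise. -/
/-!
The image of `g` in `GL_4(F)` is a nontrivial matrix killed by `X ^ q - 1 = (X - 1) Φ_q`, so
its minimal polynomial shares a root `ζ` with `Φ_q`: a primitive `q`-th root of unity of degree
at most `4` over `F`. Since `ℚ(ζ) ⊆ F(ζ)`, `q - 1 = [ℚ(ζ) : ℚ]` divides
`[F(ζ) : ℚ] = 2 [F(ζ) : F] ≤ 8`, so `q ∈ {2, 3, 5, 7}`, and for `q = 7` we get `[F(ζ) : F] = 3`.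
The exponents `k` for which `ζ ^ k` is an `F`-conjugate of `ζ` then form the subgroup of order
`3` of `(ℤ/7)ˣ`, namely `{1, 2, 4}`, so the Gauss period `ζ + ζ ^ 2 + ζ ^ 4` lies in `F`, and
`(2 (ζ + ζ ^ 2 + ζ ^ 4) + 1) ^ 2 = -7`.
-/

open NumberField Polynomial IntermediateField

theorem Matrix.exists_isPrimitiveRoot_natDegree_minpoly_le_of_orderOf_eq_prime
    {F n : Type*} [Field F] [CharZero F] [Fintype n] [DecidableEq n]
    {A : Matrix n n F} {q : ℕ} (hq : q.Prime) (hA : orderOf A = q) :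
    ∃ ζ : AlgebraicClosure F, IsPrimitiveRoot ζ q ∧
      (minpoly F ζ).natDegree ≤ Fintype.card n := by
  have := Fact.mk hq
  have hint : IsIntegral F A := Algebra.IsIntegral.isIntegral A
  have hdvd : minpoly F A ∣ cyclotomic q F * (X - 1) := by
    rw [cyclotomic_prime_mul_X_sub_one]
    exact minpoly.dvd F A (by simp [← hA, pow_orderOf_eq_one])
  obtain ⟨ζ, hζA, hζq⟩ : ∃ ζ : AlgebraicClosure F,
      aeval ζ (minpoly F A) = 0 ∧ aeval ζ (cyclotomic q F) = 0 := by
    by_contra h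
    have hcop : IsCoprime (minpoly F A) (cyclotomic q F) :=
      (isCoprime_iff_aeval_ne_zero_of_isAlgClosed F (AlgebraicClosure F) _ _).2
        fun a => not_and_or.mp fun ha => h ⟨a, ha⟩
    have hA1 : aeval A (X - 1 : F[X]) = 0 :=
      minpoly.dvd_iff.mp (hcop.dvd_of_dvd_mul_left hdvd)
    rw [map_sub, aeval_X, map_one, sub_eq_zero] at hA1
    exact hq.ne_one (by rw [← hA, hA1, orderOf_one])
  refine ⟨ζ, ?_, ?_⟩
  · rwa [← isRoot_cyclotomic_iff, IsRoot, ← map_cyclotomic q (algebraMap F _),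
      eval_map_algebraMap]
  · calc (minpoly F ζ).natDegree ≤ (minpoly F A).natDegree :=
          natDegree_le_of_dvd (minpoly.dvd F ζ hζA) (minpoly.ne_zero hint)
      _ ≤ A.charpoly.natDegree :=
          natDegree_le_of_dvd A.minpoly_dvd_charpoly A.charpoly_monic.ne_zero
      _ = Fintype.card n := A.charpoly_natDegree_eq_dim

theorem Matrix.GeneralLinearGroup.orderOf_map_val {n R S : Type*} [Fintype n] [DecidableEq n]
    [CommRing R] [CommRing S] {f : R →+* S} (hf : Function.Injective f) (g : GL n R) :
    orderOf ((g : Matrix n n R).map f) = orderOf g :=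
  orderOf_injective ((f.mapMatrix : Matrix n n R →+* Matrix n n S).toMonoidHom.comp
    (Units.coeHom (Matrix n n R))) ((Matrix.map_injective hf).comp Units.val_injective) g

theorem IsPrimitiveRoot.totient_dvd_finrank_mul_natDegree_minpoly {F K : Type*} [Field F]
    [CharZero F] [Field K] [CharZero K] [Algebra F K] {ζ : K} {q : ℕ} (hq : 0 < q)
    (hζ : IsPrimitiveRoot ζ q) :
    q.totient ∣ Module.finrank ℚ F * (minpoly F ζ).natDegree := by
  have hle : ℚ⟮ζ⟯ ≤ F⟮ζ⟯.restrictScalars ℚ :=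
    adjoin_simple_le_iff.mpr (mem_adjoin_simple_self F ζ)
  have hζℚ : Module.finrank ℚ ℚ⟮ζ⟯ = q.totient := by
    rw [adjoin.finrank (hζ.isIntegral hq).tower_top, ← cyclotomic_eq_minpoly_rat hζ hq,
      natDegree_cyclotomic]
  have hζF : Module.finrank ℚ (F⟮ζ⟯.restrictScalars ℚ) =
      Module.finrank ℚ F * (minpoly F ζ).natDegree := by
    rw [← adjoin.finrank (hζ.isIntegral hq).tower_top]
    exact (Module.finrank_mul_finrank ℚ F F⟮ζ⟯).symm
  exact hζℚ ▸ hζF ▸ finrank_dvd_of_le_right hle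

section Conjugates

variable {F K : Type*} [Field F] [Field K] [Algebra F K] [Normal F K]

theorem aeval_pow_mul_minpoly_eq_zero {ζ : K} {a b : ℕ}
    (ha : aeval (ζ ^ a) (minpoly F ζ) = 0) (hb : aeval (ζ ^ b) (minpoly F ζ) = 0) :
    aeval (ζ ^ (a * b)) (minpoly F ζ) = 0 := by
  obtain ⟨σ, hσ⟩ := minpoly.exists_algEquiv_of_root' (Algebra.IsAlgebraic.isAlgebraic ζ) ha
  rw [pow_mul, ← hσ, ← map_pow, ← AlgEquiv.coe_toAlgHom, aeval_algHom_apply, hb, map_zero]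

theorem IsPrimitiveRoot.exists_pow_eq_of_aeval_minpoly_eq_zero {ζ x : K} {n : ℕ} (hn : 1 < n)
    (hζ : IsPrimitiveRoot ζ n) (hx : aeval x (minpoly F ζ) = 0) :
    ∃ k ∈ Finset.Ioo 0 n, ζ ^ k = x := by
  obtain ⟨σ, rfl⟩ := minpoly.exists_algEquiv_of_root' (Algebra.IsAlgebraic.isAlgebraic ζ) hx
  have hσζ : IsPrimitiveRoot (σ ζ) n := hζ.map_of_injective σ.injective
  have : NeZero n := ⟨by omega⟩
  obtain ⟨k, hk, hζk⟩ := hζ.eq_pow_of_pow_eq_one hσζ.pow_eq_one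
  refine ⟨k, Finset.mem_Ioo.mpr ⟨Nat.pos_of_ne_zero ?_, hk⟩, hζk⟩
  rintro rfl
  exact hσζ.ne_one hn (by rw [← hζk, pow_zero])

theorem IsPrimitiveRoot.aroots_minpoly_eq_map [CharZero F] [DecidableEq K] {ζ : K} {n : ℕ}
    (hn : 1 < n) (hζ : IsPrimitiveRoot ζ n) :
    (minpoly F ζ).aroots K =
      ((Finset.Ioo 0 n).filter fun k => aeval (ζ ^ k) (minpoly F ζ) = 0).val.map (ζ ^ ·) := by
  have hζint : IsIntegral F ζ := Algebra.IsIntegral.isIntegral ζ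
  refine (Multiset.Nodup.ext (nodup_roots (minpoly.irreducible hζint).separable.map)
    (Multiset.Nodup.map_on ?_ (Finset.nodup _))).mpr fun x => ?_
  · intro k hk l hl hkl
    simp only [Finset.mem_val, Finset.mem_filter, Finset.mem_Ioo] at hk hl
    exact hζ.pow_inj (by omega) (by omega) hkl
  · simp only [mem_aroots, minpoly.ne_zero hζint, ne_eq, not_false_eq_true, true_and,
      Multiset.mem_map, Finset.mem_val, Finset.mem_filter]
    constructor
    · intro hx
      obtain ⟨k, hk, rfl⟩ := hζ.exists_pow_eq_of_aeval_minpoly_eq_zero (F := F) hn hx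
      exact ⟨k, ⟨hk, hx⟩, rfl⟩
    · rintro ⟨k, ⟨-, hk⟩, rfl⟩
      exact hk

end Conjugates

theorem eq_one_two_four_of_sq_mod_seven_mem :
    ∀ E ∈ (Finset.Ioo 0 7).powerset, 1 ∈ E → (∀ k ∈ E, k ^ 2 % 7 ∈ E) → E.card = 3 →
      E = {1, 2, 4} := by
  decide

theorem IsPrimitiveRoot.two_mul_add_one_sq_eq_neg_seven {R : Type*} [CommRing R] [IsDomain R]
    {ζ : R} (hζ : IsPrimitiveRoot ζ 7) : (2 * (ζ + ζ ^ 2 + ζ ^ 4) + 1) ^ 2 = -7 := by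
  have hsum := hζ.geom_sum_eq_zero (by norm_num)
  simp only [Finset.sum_range_succ, Finset.sum_range_zero] at hsum
  linear_combination 8 * hsum + 4 * ζ * hζ.pow_eq_one

theorem exists_sq_eq_neg_seven_of_natDegree_minpoly_eq_three {F K : Type*} [Field F]
    [CharZero F] [Field K] [Algebra F K] [Normal F K] {ζ : K} (hζ : IsPrimitiveRoot ζ 7)
    (hdeg : (minpoly F ζ).natDegree = 3) : ∃ x : F, x ^ 2 = -7 := by
  classical
  set m := minpoly F ζ
  set E := (Finset.Ioo 0 7).filter fun k => aeval (ζ ^ k) m = 0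
  have hroots : m.aroots K = E.val.map (ζ ^ ·) := hζ.aroots_minpoly_eq_map (by norm_num)
  have hsplits : (m.map (algebraMap F K)).Splits := Normal.splits inferInstance ζ
  have hcard : E.card = 3 := by
    rw [← hdeg, ← natDegree_map (algebraMap F K), hsplits.natDegree_eq_card_roots]
    change _ = Multiset.card (m.aroots K)
    rw [hroots, Multiset.card_map, Finset.card_val]
  have hE : E = {1, 2, 4} := by
    refine eq_one_two_four_of_sq_mod_seven_mem E
      (Finset.mem_powerset.mpr (Finset.filter_subset _ _))
      (Finset.mem_filter.mpr ⟨by decide, by rw [pow_one]; exact minpoly.aeval F ζ⟩) ?_ hcard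
    intro k hk
    simp only [E, Finset.mem_filter] at hk ⊢
    refine ⟨(by decide : ∀ k ∈ Finset.Ioo 0 7, k ^ 2 % 7 ∈ Finset.Ioo 0 7) k hk.1, ?_⟩
    rw [hζ.eq_orderOf, pow_mod_orderOf, sq]
    exact aeval_pow_mul_minpoly_eq_zero hk.2 hk.2
  have hnextCoeff : algebraMap F K m.nextCoeff = -(ζ + ζ ^ 2 + ζ ^ 4) := by
    rw [← nextCoeff_map (algebraMap F K).injective,
      hsplits.nextCoeff_eq_neg_sum_roots_of_monic
        ((minpoly.monic (Algebra.IsIntegral.isIntegral ζ)).map _)]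
    change -(m.aroots K).sum = _
    rw [hroots, hE]
    simp [add_assoc]
  refine ⟨1 - 2 * m.nextCoeff, (algebraMap F K).injective ?_⟩
  simp only [map_pow, map_sub, map_mul, map_one, map_ofNat, map_neg, hnextCoeff]
  linear_combination hζ.two_mul_add_one_sq_eq_neg_seven

theorem prime_order_GL4_imaginary_quadratic_general
    (F : Type*) [Field F] [NumberField F] (h2 : Module.finrank ℚ F = 2)
    (g : GL (Fin 4) (𝓞 F)) (q : ℕ) (hq : q.Prime) (hg : orderOf g = q) :
    ((∃ x : F, x ^ 2 = -7) → q ∈ ({2, 3, 5, 7} : Set ℕ)) ∧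
    ((¬ ∃ x : F, x ^ 2 = -7) → q ∈ ({2, 3, 5} : Set ℕ)) := by
  have hA : orderOf ((g : Matrix (Fin 4) (Fin 4) (𝓞 F)).map (algebraMap (𝓞 F) F)) = q := by
    rw [Matrix.GeneralLinearGroup.orderOf_map_val (FaithfulSMul.algebraMap_injective _ _), hg]
  obtain ⟨ζ, hζ, hdeg⟩ :=
    Matrix.exists_isPrimitiveRoot_natDegree_minpoly_le_of_orderOf_eq_prime hq hA
  rw [Fintype.card_fin] at hdeg
  have hdeg0 : 0 < (minpoly F ζ).natDegree :=
    minpoly.natDegree_pos (Algebra.IsIntegral.isIntegral (R := F) ζ)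
  have hdvd := hζ.totient_dvd_finrank_mul_natDegree_minpoly (F := F) hq.pos
  rw [h2, Nat.totient_prime hq] at hdvd
  have hq_le : q ≤ 9 := by have := Nat.le_of_dvd (by omega) hdvd; omega
  have hq_cases : q = 2 ∨ q = 3 ∨ q = 5 ∨ q = 7 := by
    interval_cases q <;> first | omega | norm_num at hq
  refine ⟨fun _ => by simp only [Set.mem_insert_iff, Set.mem_singleton_iff]; omega,
    fun hno => ?_⟩
  have hq_ne_seven : q ≠ 7 := by
    rintro rfl
    exact hno (exists_sq_eq_neg_seven_of_natDegree_minpoly_eq_three hζ (by omega))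
  simp only [Set.mem_insert_iff, Set.mem_singleton_iff]
  omega

/-- If `g ∈ GL_4(O_F)` has prime order `q`, where `O_F` is the ring of integers of an
imaginary quadratic field `F`, then `q ∈ {2,3,5,7}` if `F = ℚ(√-7)` and `q ∈ {2,3,5}`
otherwise. -/
theorem prime_order_GL4_imaginary_quadratic
    (F : Type*) [Field F] [NumberField F] (h2 : Module.finrank ℚ F = 2)
    (himag : ∀ φ : F →+* ℝ, False)
    (g : GL (Fin 4) (𝓞 F)) (q : ℕ) (hq : q.Prime) (hg : orderOf g = q) :
    ((∃ x : F, x ^ 2 = -7) → q ∈ ({2, 3, 5, 7} : Set ℕ)) ∧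
    ((¬ ∃ x : F, x ^ 2 = -7) → q ∈ ({2, 3, 5} : Set ℕ)) :=
  prime_order_GL4_imaginary_quadratic_general F h2 g q hq hg
end
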